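/- The second product ∘ is bicovariant: for every x ∈ H1□H1 one has DL(∘(x)) = (id_H ⊗ ∘)((DL ⊗ id_{H1})(x)), and for every x ∈ H1⊗H1 one has DR(∘(x)) = (∘ ⊗ id_H)((id_{H1} ⊗ DR)(x)). (Part of the proof of Theorem 2.6: ∘ restricted to H1□H1 is a morphism of H-bicomodules.) -/

import Mathlib

open TensorProduct

noncomputable section

variable (k A H : Type*) [Field k] [Ring A] [Ring H]
  [HopfAlgebra k A] [HopfAlgebra k H]

/-- `t(a⊗h) = d(a)h`. -/
def tmap (d : A →ₗ[k] H) : A ⊗[k] H →ₗ[k] H :=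
  LinearMap.mul' k H ∘ₗ map d LinearMap.id

/-- `s(a⊗h) = ε(a)h`. -/
def smap : A ⊗[k] H →ₗ[k] H :=
  (TensorProduct.lid k H).toLinearMap ∘ₗ map (Coalgebra.counit : A →ₗ[k] k) LinearMap.id

/-- `i(h) = 1⊗h`. -/
def imap : H →ₗ[k] A ⊗[k] H := TensorProduct.mk k A H 1

/-- The tensor-product coproduct `Δ(a⊗h) = (a₁⊗h₁) ⊗ (a₂⊗h₂)` on `H1 = A ⊗ H`. -/
def comul1 : A ⊗[k] H →ₗ[k] (A ⊗[k] H) ⊗[k] (A ⊗[k] H) :=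
  (tensorTensorTensorComm k A A H H).toLinearMap ∘ₗ
    map (Coalgebra.comul : A →ₗ[k] A ⊗[k] A) (Coalgebra.comul : H →ₗ[k] H ⊗[k] H)

/-- The tensor-product counit `ε(a⊗h) = ε(a)ε(h)` on `H1 = A ⊗ H`. -/
def counit1 : A ⊗[k] H →ₗ[k] k :=
  (TensorProduct.lid k k).toLinearMap ∘ₗ
    map (Coalgebra.counit : A →ₗ[k] k) (Coalgebra.counit : H →ₗ[k] k)

/-- The left coaction `DL = (t⊗id)Δ`. -/
def DLmap (d : A →ₗ[k] H) : A ⊗[k] H →ₗ[k] H ⊗[k] (A ⊗[k] H) :=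
  map (tmap k A H d) LinearMap.id ∘ₗ comul1 k A H

/-- The right coaction `DR = (id⊗s)Δ`. -/
def DRmap : A ⊗[k] H →ₗ[k] (A ⊗[k] H) ⊗[k] H :=
  map LinearMap.id (smap k A H) ∘ₗ comul1 k A H

/-- The second product `(a⊗h)∘(b⊗g) = ε(h) ab ⊗ g`. -/
def circ : (A ⊗[k] H) ⊗[k] (A ⊗[k] H) →ₗ[k] A ⊗[k] H :=
  map (LinearMap.mul' k A)
      ((TensorProduct.lid k H).toLinearMap ∘ₗ map (Coalgebra.counit : H →ₗ[k] k) LinearMap.id)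
    ∘ₗ (tensorTensorTensorComm k A H A H).toLinearMap

/-- The quantum groupoid antipode `𝒮(a⊗h) = S(a₁) ⊗ d(a₂)h`. -/
def SS (d : A →ₗ[k] H) : A ⊗[k] H →ₗ[k] A ⊗[k] H :=
  map (HopfAlgebra.antipode (R := k) : A →ₗ[k] A) (tmap k A H d)
    ∘ₗ (TensorProduct.assoc k A A H).toLinearMap
    ∘ₗ map (Coalgebra.comul : A →ₗ[k] A ⊗[k] A) LinearMap.id

/-- The smash product multiplication `(a⊗h)(b⊗g) = a(h₁▷b) ⊗ h₂g`. -/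
def smashMul (act : H ⊗[k] A →ₗ[k] A) :
    (A ⊗[k] H) ⊗[k] (A ⊗[k] H) →ₗ[k] A ⊗[k] H :=
  map (LinearMap.mul' k A) LinearMap.id
  ∘ₗ (TensorProduct.assoc k A A H).symm.toLinearMap
  ∘ₗ map LinearMap.id
      (map act (LinearMap.mul' k H)
        ∘ₗ (tensorTensorTensorComm k H H A H).toLinearMap)
  ∘ₗ (TensorProduct.assoc k A (H ⊗[k] H) (A ⊗[k] H)).toLinearMap
  ∘ₗ map (map LinearMap.id (Coalgebra.comul : H →ₗ[k] H ⊗[k] H)) LinearMap.id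

/-- The cotensor product `H1□H1`. -/
def cot (d : A →ₗ[k] H) : Set ((A ⊗[k] H) ⊗[k] (A ⊗[k] H)) :=
  {x | (TensorProduct.assoc k (A ⊗[k] H) H (A ⊗[k] H)).toLinearMap
        (map (DRmap k A H) LinearMap.id x) = map LinearMap.id (DLmap k A H d) x}

/-- A Hopf (algebra) crossed module. -/
structure HopfCrossedModule (act : H ⊗[k] A →ₗ[k] A) (d : A →ₗ[k] H) : Prop where
  /-- `(hg)▷a = h▷(g▷a)` -/
  act_mul : ∀ (h g : H) (a : A), act ((h * g) ⊗ₜ[k] a) = act (h ⊗ₜ[k] act (g ⊗ₜ[k] a))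
  /-- `1▷a = a` -/
  act_one : ∀ a : A, act ((1 : H) ⊗ₜ[k] a) = a
  /-- `h▷(ab) = (h₁▷a)(h₂▷b)` -/
  act_mul_alg : act ∘ₗ map LinearMap.id (LinearMap.mul' k A)
      = LinearMap.mul' k A ∘ₗ map act act
          ∘ₗ (tensorTensorTensorComm k H H A A).toLinearMap
          ∘ₗ map (Coalgebra.comul : H →ₗ[k] H ⊗[k] H) LinearMap.id
  /-- `h▷1 = ε(h)1` -/
  act_unit : ∀ h : H, act (h ⊗ₜ[k] (1 : A)) = (Coalgebra.counit h : k) • (1 : A)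
  /-- `Δ(h▷a) = (h₁▷a₁)⊗(h₂▷a₂)` -/
  act_comul : (Coalgebra.comul : A →ₗ[k] A ⊗[k] A) ∘ₗ act
      = map act act ∘ₗ (tensorTensorTensorComm k H H A A).toLinearMap
          ∘ₗ map (Coalgebra.comul : H →ₗ[k] H ⊗[k] H) (Coalgebra.comul : A →ₗ[k] A ⊗[k] A)
  /-- `ε(h▷a) = ε(h)ε(a)` -/
  act_counit : ∀ (h : H) (a : A),
      (Coalgebra.counit (act (h ⊗ₜ[k] a)) : k) = Coalgebra.counit h * Coalgebra.counit a
  /-- `h₁ ⊗ (h₂▷a) = h₂ ⊗ (h₁▷a)` -/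
  act_cocomm : map LinearMap.id act ∘ₗ (TensorProduct.assoc k H H A).toLinearMap
        ∘ₗ map (Coalgebra.comul : H →ₗ[k] H ⊗[k] H) LinearMap.id
      = map LinearMap.id act ∘ₗ (TensorProduct.assoc k H H A).toLinearMap
        ∘ₗ map ((TensorProduct.comm k H H).toLinearMap
              ∘ₗ (Coalgebra.comul : H →ₗ[k] H ⊗[k] H)) LinearMap.id
  /-- `d` is multiplicative -/
  d_mul : ∀ a b : A, d (a * b) = d a * d b
  /-- `d(1) = 1` -/
  d_one : d 1 = 1
  /-- `d` is comultiplicative -/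
  d_comul : (Coalgebra.comul : H →ₗ[k] H ⊗[k] H) ∘ₗ d
      = map d d ∘ₗ (Coalgebra.comul : A →ₗ[k] A ⊗[k] A)
  /-- `ε∘d = ε` -/
  d_counit : (Coalgebra.counit : H →ₗ[k] k) ∘ₗ d = (Coalgebra.counit : A →ₗ[k] k)
  /-- `d(h▷a) = h₁ d(a) S(h₂)` -/
  d_act : d ∘ₗ act = LinearMap.mul' k H
      ∘ₗ map LinearMap.id (LinearMap.mul' k H
            ∘ₗ map LinearMap.id (HopfAlgebra.antipode (R := k) : H →ₗ[k] H)
            ∘ₗ (TensorProduct.comm k H H).toLinearMap)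
      ∘ₗ (TensorProduct.assoc k H H H).toLinearMap
      ∘ₗ map (Coalgebra.comul : H →ₗ[k] H ⊗[k] H) d
  /-- `d(a)▷b = a₁ b S(a₂)` -/
  crossed : act ∘ₗ map d LinearMap.id = LinearMap.mul' k A
      ∘ₗ map LinearMap.id (LinearMap.mul' k A
            ∘ₗ map LinearMap.id (HopfAlgebra.antipode (R := k) : A →ₗ[k] A)
            ∘ₗ (TensorProduct.comm k A A).toLinearMap)
      ∘ₗ (TensorProduct.assoc k A A A).toLinearMap
      ∘ₗ map (Coalgebra.comul : A →ₗ[k] A ⊗[k] A) LinearMap.id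


/-! `(a ⊗ h) ∘ (b ⊗ g) = ε(h) ab ⊗ g` keeps the `H`-leg `g` of the second factor, which is all
that `DR(b ⊗ g) = b ⊗ g₁ ⊗ g₂` acts on, so right covariance holds on all of `H1 ⊗ H1`.
For left covariance both sides factor through `Φ = coactCirc d`,
`Φ((a ⊗ h) ⊗ (h' ⊗ (b ⊗ g))) = ε(h) d(a₁)h' ⊗ a₂b ⊗ g`: since `d` and `Δ` are multiplicative,
`DL(x ∘ y) = Φ(x ⊗ DL y)`, and by counitality `Φ(DR x ⊗ y) = (id ⊗ ∘)(DL x ⊗ y)`.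
On `H1□H1` the cotensor condition identifies the two arguments of `Φ`. -/

open scoped Coalgebra

lemma Coalgebra.sum_counit_right_smul {R M ι : Type*} [CommSemiring R] [AddCommMonoid M]
    [Module R M] [Coalgebra R M] {a : M} (𝓡 : Coalgebra.Repr R a ι) :
    ∑ i ∈ 𝓡.index, Coalgebra.counit (R := R) (𝓡.right i) • 𝓡.left i = a := by
  simpa only [map_sum, rid_tmul, one_smul] using
    congrArg (_root_.TensorProduct.rid R M) (Coalgebra.sum_tmul_counit_eq 𝓡)

lemma Coalgebra.sum_counit_smul_apply {R M N ι : Type*} [CommSemiring R] [AddCommMonoid M]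
    [Module R M] [Coalgebra R M] [AddCommMonoid N] [Module R N] {a : M}
    (𝓡 : Coalgebra.Repr R a ι) (f : M →ₗ[R] N) :
    ∑ i ∈ 𝓡.index, Coalgebra.counit (R := R) (𝓡.left i) • f (𝓡.right i) = f a := by
  simp only [← map_smul, ← map_sum, Coalgebra.sum_counit_smul]

lemma Coalgebra.sum_counit_right_smul_apply {R M N ι : Type*} [CommSemiring R]
    [AddCommMonoid M] [Module R M] [Coalgebra R M] [AddCommMonoid N] [Module R N] {a : M}
    (𝓡 : Coalgebra.Repr R a ι) (f : M →ₗ[R] N) :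
    ∑ i ∈ 𝓡.index, Coalgebra.counit (R := R) (𝓡.right i) • f (𝓡.left i) = f a := by
  simp only [← map_smul, ← map_sum, Coalgebra.sum_counit_right_smul]

section

variable {k A H}

lemma comul1_tmul (a : A) (h : H) {ι κ : Type*} (ra : Coalgebra.Repr k a ι)
    (rh : Coalgebra.Repr k h κ) :
    comul1 k A H (a ⊗ₜ[k] h) = ∑ i ∈ ra.index, ∑ j ∈ rh.index,
      (ra.left i ⊗ₜ[k] rh.left j) ⊗ₜ[k] (ra.right i ⊗ₜ[k] rh.right j) := by
  simp only [comul1, LinearMap.coe_comp, LinearEquiv.coe_coe, Function.comp_apply, map_tmul,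
    ← ra.eq, ← rh.eq, tmul_sum, sum_tmul, map_sum, tensorTensorTensorComm_tmul]
  exact Finset.sum_comm

lemma circ_tmul (a : A) (h : H) (b : A) (g : H) :
    circ k A H ((a ⊗ₜ[k] h) ⊗ₜ[k] (b ⊗ₜ[k] g))
      = Coalgebra.counit (R := k) h • ((a * b) ⊗ₜ[k] g) := by
  simp [circ, LinearMap.mul'_apply, tmul_smul]

lemma DLmap_tmul (d : A →ₗ[k] H) (a : A) (h : H) {ι κ : Type*} (ra : Coalgebra.Repr k a ι)
    (rh : Coalgebra.Repr k h κ) :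
    DLmap k A H d (a ⊗ₜ[k] h) = ∑ i ∈ ra.index, ∑ j ∈ rh.index,
      (d (ra.left i) * rh.left j) ⊗ₜ[k] (ra.right i ⊗ₜ[k] rh.right j) := by
  simp [DLmap, comul1_tmul a h ra rh, tmap, LinearMap.mul'_apply]

lemma DRmap_tmul (a : A) (h : H) {ι : Type*} (rh : Coalgebra.Repr k h ι) :
    DRmap k A H (a ⊗ₜ[k] h) = ∑ j ∈ rh.index, (a ⊗ₜ[k] rh.left j) ⊗ₜ[k] rh.right j := by
  simp only [DRmap, LinearMap.comp_apply, comul1_tmul a h (ℛ k a) rh, map_sum, map_tmul,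
    LinearMap.id_coe, id_eq, smap, LinearEquiv.coe_coe, lid_tmul, tmul_smul]
  rw [Finset.sum_comm]
  refine Finset.sum_congr rfl fun j _ => ?_
  simp only [smul_tmul', ← sum_tmul, Coalgebra.sum_counit_right_smul]

lemma DRmap_comp_circ : DRmap k A H ∘ₗ circ k A H
    = map (circ k A H) LinearMap.id
        ∘ₗ (TensorProduct.assoc k (A ⊗[k] H) (A ⊗[k] H) H).symm.toLinearMap
        ∘ₗ map LinearMap.id (DRmap k A H) := by
  ext a h b g
  simp [circ_tmul, DRmap_tmul _ g (ℛ k g), tmul_sum, smul_tmul']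

def coactCirc (d : A →ₗ[k] H) :
    (A ⊗[k] H) ⊗[k] (H ⊗[k] (A ⊗[k] H)) →ₗ[k] H ⊗[k] (A ⊗[k] H) :=
  map (LinearMap.mul' k H)
      (map (LinearMap.mul' k A) LinearMap.id ∘ₗ (TensorProduct.assoc k A A H).symm.toLinearMap)
    ∘ₗ (tensorTensorTensorComm k H A H (A ⊗[k] H)).toLinearMap
    ∘ₗ map (map d LinearMap.id ∘ₗ (Coalgebra.comul : A →ₗ[k] A ⊗[k] A)
        ∘ₗ (TensorProduct.rid k A).toLinearMap
        ∘ₗ map LinearMap.id (Coalgebra.counit : H →ₗ[k] k)) LinearMap.id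

lemma coactCirc_tmul (d : A →ₗ[k] H) (a : A) (h h' : H) (b : A) (g : H) {ι : Type*}
    (ra : Coalgebra.Repr k a ι) :
    coactCirc d ((a ⊗ₜ[k] h) ⊗ₜ[k] (h' ⊗ₜ[k] (b ⊗ₜ[k] g)))
      = ∑ i ∈ ra.index, Coalgebra.counit (R := k) h •
          ((d (ra.left i) * h') ⊗ₜ[k] ((ra.right i * b) ⊗ₜ[k] g)) := by
  simp [coactCirc, ← ra.eq, sum_tmul, smul_tmul', LinearMap.mul'_apply, Finset.smul_sum]

lemma DLmap_comp_circ (d : A →ₗ[k] H) (hd : ∀ a b : A, d (a * b) = d a * d b) :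
    DLmap k A H d ∘ₗ circ k A H = coactCirc d ∘ₗ map LinearMap.id (DLmap k A H d) := by
  ext a h b g
  set ra := ℛ k a
  set rb := ℛ k b
  set rg := ℛ k g
  simp only [AlgebraTensorModule.curry_apply, curry_apply, LinearMap.coe_restrictScalars,
    LinearMap.comp_apply, map_tmul, LinearMap.id_coe, id_eq]
  rw [circ_tmul, map_smul, DLmap_tmul d (a * b) g (ra.mul rb) rg, DLmap_tmul d b g rb rg]
  simp only [tmul_sum, map_sum, coactCirc_tmul d a h _ _ _ ra, Coalgebra.Repr.mul_index,
    Coalgebra.Repr.mul_left, Coalgebra.Repr.mul_right, Finset.sum_product, hd,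
    Finset.smul_sum, mul_assoc]
  rw [Finset.sum_comm]
  exact Finset.sum_congr rfl fun _ _ => Finset.sum_comm

lemma coactCirc_comp_DRmap (d : A →ₗ[k] H) :
    coactCirc d ∘ₗ (TensorProduct.assoc k (A ⊗[k] H) H (A ⊗[k] H)).toLinearMap
        ∘ₗ map (DRmap k A H) LinearMap.id
      = map LinearMap.id (circ k A H)
          ∘ₗ (TensorProduct.assoc k H (A ⊗[k] H) (A ⊗[k] H)).toLinearMap
          ∘ₗ map (DLmap k A H d) LinearMap.id := by
  ext a h b g
  set ra := ℛ k a
  set rh := ℛ k h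
  simp only [AlgebraTensorModule.curry_apply, curry_apply, LinearMap.coe_restrictScalars,
    LinearMap.comp_apply, map_tmul, LinearMap.id_coe, id_eq]
  rw [DRmap_tmul a h rh, DLmap_tmul d a h ra rh]
  simp only [sum_tmul, map_sum, LinearEquiv.coe_coe, assoc_tmul, map_tmul,
    LinearMap.id_coe, id_eq, coactCirc_tmul d a _ _ b g ra, circ_tmul, tmul_smul]
  rw [Finset.sum_comm]
  refine Finset.sum_congr rfl fun i _ => ?_
  let f : H →ₗ[k] H ⊗[k] (A ⊗[k] H) :=
    (TensorProduct.mk k H (A ⊗[k] H)).flip ((ra.right i * b) ⊗ₜ[k] g)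
      ∘ₗ LinearMap.mulLeft k (d (ra.left i))
  exact (Coalgebra.sum_counit_smul_apply rh f).trans
    (Coalgebra.sum_counit_right_smul_apply rh f).symm

end

theorem statement4 (act : H ⊗[k] A →ₗ[k] A) (d : A →ₗ[k] H)
    (hcm : HopfCrossedModule k A H act d) :
    (∀ x ∈ cot k A H d,
      DLmap k A H d (circ k A H x)
        = map LinearMap.id (circ k A H)
            ((TensorProduct.assoc k H (A ⊗[k] H) (A ⊗[k] H)).toLinearMap
              (map (DLmap k A H d) LinearMap.id x)))
    ∧ (∀ x : (A ⊗[k] H) ⊗[k] (A ⊗[k] H),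
      DRmap k A H (circ k A H x)
        = map (circ k A H) LinearMap.id
            ((TensorProduct.assoc k (A ⊗[k] H) (A ⊗[k] H) H).symm.toLinearMap
              (map LinearMap.id (DRmap k A H) x))) := by
  refine ⟨fun x hx => ?_, LinearMap.congr_fun (DRmap_comp_circ (k := k))⟩
  calc DLmap k A H d (circ k A H x)
      = coactCirc d (map LinearMap.id (DLmap k A H d) x) :=
        LinearMap.congr_fun (DLmap_comp_circ d hcm.d_mul) x
    _ = coactCirc d ((TensorProduct.assoc k (A ⊗[k] H) H (A ⊗[k] H)).toLinearMap
          (map (DRmap k A H) LinearMap.id x)) := congrArg (coactCirc d) hx.symm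
    _ = _ := LinearMap.congr_fun (coactCirc_comp_DRmap d) x

end
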